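/- arXiv:0804.2310 — 4 statements merged into one kernel-verified Lean document; each statement's English description precedes it below -/
import Mathlib

section
/- For a nonnegative random variable X with E[X] = g1 > 0 and E[X²] = g2 finite, the Laplace transform satisfies E[e^{-sX}] ≤ 1 - g1²/g2 + (g1²/g2)·exp(-(g2/g1)·s) for all s ≥ 0. -/
/-!
For `a > 0` let `q_a` be the quadratic that agrees with `exp (-t)` at `0` and to first order
at `a`. Then `exp t * q_a t` equals `1` at `0` and at `a`, and its derivative is
`exp t * γ * (t - a) * (t - r)` with `γ > 0` and `r ≤ a` (from `exp a > 1 + a` and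
`exp a ≥ 1 + a + a²/2`), so it stays `≥ 1` on `[0, ∞)`: `q_a` majorizes `exp (-t)` there.
Taking `a = s g2 / g1` makes the `t (t - a)` part of `q_a (s X)` have mean
`s² g2 - a s g1 = 0`, hence `E[exp (-s X)] ≤ E[q_a (s X)] = 1 - (g1² / g2) (1 - exp (-a))`.
-/

open MeasureTheory Set

open Real ProbabilityTheory

theorem min_le_of_hasDerivAt_mul_sub_mul_sub {H w : ℝ → ℝ} {a r t : ℝ}
    (hH : ∀ x, HasDerivAt H (w x * ((x - a) * (x - r))) x) (hw : ∀ x, 0 ≤ w x)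
    (hra : r ≤ a) (ha : 0 ≤ a) (ht : 0 ≤ t) : min (H 0) (H a) ≤ H t := by
  have hcont : ContinuousOn H univ := fun x _ => (hH x).continuousAt.continuousWithinAt
  have hH' (s : Set ℝ) (x : ℝ) : HasDerivWithinAt H (w x * ((x - a) * (x - r))) s x :=
    (hH x).hasDerivWithinAt
  set r₀ := max r 0
  rcases le_total t r₀ with htr | hrt
  · have hmono : MonotoneOn H (Icc 0 r₀) :=
      monotoneOn_of_hasDerivWithinAt_nonneg (convex_Icc _ _) (hcont.mono (subset_univ _))
        (fun x _ => hH' _ x) fun x hx => by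
          rw [interior_Icc] at hx
          have hxr : x < r := by
            rcases lt_max_iff.mp hx.2 with h | h
            · exact h
            · linarith [hx.1]
          exact mul_nonneg (hw x) (mul_nonneg_of_nonpos_of_nonpos (by linarith) (by linarith))
    exact (min_le_left _ _).trans (hmono ⟨le_rfl, le_max_right _ _⟩ ⟨ht, htr⟩ ht)
  rcases le_total t a with hta | hat
  · have hanti : AntitoneOn H (Icc r₀ a) :=
      antitoneOn_of_hasDerivWithinAt_nonpos (convex_Icc _ _) (hcont.mono (subset_univ _))
        (fun x _ => hH' _ x) fun x hx => by
          rw [interior_Icc] at hx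
          have hrx : r < x := (le_max_left r 0).trans_lt hx.1
          exact mul_nonpos_of_nonneg_of_nonpos (hw x)
            (mul_nonpos_of_nonpos_of_nonneg (by linarith [hx.2]) (by linarith))
    exact (min_le_right _ _).trans (hanti ⟨hrt, hta⟩ ⟨max_le hra ha, le_rfl⟩ hta)
  · have hmono : MonotoneOn H (Ici a) :=
      monotoneOn_of_hasDerivWithinAt_nonneg (convex_Ici _) (hcont.mono (subset_univ _))
        (fun x _ => hH' _ x) fun x hx => by
          rw [interior_Ici, mem_Ioi] at hx
          exact mul_nonneg (hw x) (mul_nonneg (by linarith) (by linarith))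
    exact (min_le_right _ _).trans (hmono self_mem_Ici hat hat)

/-- The quadratic that agrees with `exp (-t)` at `t = 0` and to first order at `t = a`. -/
noncomputable def expNegMajorant (a t : ℝ) : ℝ :=
  1 - (1 - exp (-a)) / a * t + (1 - exp (-a) - a * exp (-a)) / a ^ 2 * (t * (t - a))

theorem one_sub_exp_neg_sub_mul_exp_neg_pos {a : ℝ} (ha : a ≠ 0) :
    0 < 1 - exp (-a) - a * exp (-a) := by
  have hlt := mul_lt_mul_of_pos_right (add_one_lt_exp ha) (exp_pos (-a))
  rw [← exp_add, add_neg_cancel, exp_zero] at hlt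
  linarith

theorem hasDerivAt_exp_mul_expNegMajorant {a : ℝ} (ha : 0 < a) (x : ℝ) :
    HasDerivAt (fun t => exp t * expNegMajorant a t)
      (exp x * (1 - exp (-a) - a * exp (-a)) / a ^ 2 *
        ((x - a) * (x - (a - 2 + 2 * exp (-a) + a * exp (-a)) / (1 - exp (-a) - a * exp (-a)))))
      x := by
  have hγ := (one_sub_exp_neg_sub_mul_exp_neg_pos ha.ne').ne'
  set u := exp (-a) with hu
  have hq : HasDerivAt (expNegMajorant a)
      (-((1 - u) / a * 1) + (1 - u - a * u) / a ^ 2 * (1 * (x - a) + x * 1)) x :=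
    (((hasDerivAt_id x).const_mul _).const_sub 1).add
      (((hasDerivAt_id x).mul ((hasDerivAt_id x).sub_const a)).const_mul _)
  refine ((hasDerivAt_exp x).mul hq).congr_deriv ?_
  have hr := div_mul_cancel₀ (a - 2 + 2 * u + a * u) hγ
  generalize (a - 2 + 2 * u + a * u) / (1 - u - a * u) = r at hr ⊢
  rw [expNegMajorant, ← hu]
  field_simp
  linear_combination (x - a) * hr

theorem exp_neg_le_expNegMajorant {a t : ℝ} (ha : 0 < a) (ht : 0 ≤ t) :
    exp (-t) ≤ expNegMajorant a t := by
  set u := exp (-a) with hu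
  have hea : exp a * u = 1 := by rw [hu, ← exp_add, add_neg_cancel, exp_zero]
  have hγ := one_sub_exp_neg_sub_mul_exp_neg_pos ha.ne'
  have hra : (a - 2 + 2 * u + a * u) / (1 - u - a * u) ≤ a := by
    rw [div_le_iff₀ hγ]
    nlinarith [quadratic_le_exp_of_nonneg ha.le, exp_pos (-a)]
  have hmin := min_le_of_hasDerivAt_mul_sub_mul_sub (hasDerivAt_exp_mul_expNegMajorant ha)
    (fun x => by positivity) hra ha.le ht
  have h0 : exp 0 * expNegMajorant a 0 = 1 := by simp [expNegMajorant]
  have ha' : exp a * expNegMajorant a a = 1 := by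
    rw [expNegMajorant, ← hu, ← hea]; field_simp; ring
  rw [h0, ha', min_self, ← inv_le_iff_one_le_mul₀' (exp_pos t)] at hmin
  rwa [exp_neg]

theorem integrable_exp_neg_mul_of_ae_nonneg {ν : Measure ℝ} [IsFiniteMeasure ν]
    (hν : ∀ᵐ x ∂ν, 0 ≤ x) {s : ℝ} (hs : 0 ≤ s) :
    Integrable (fun x => exp (-s * x)) ν := by
  refine (integrable_const (1 : ℝ)).mono' (by fun_prop) ?_
  filter_upwards [hν] with x hx
  rw [norm_of_nonneg (exp_pos _).le, exp_le_one_iff]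
  nlinarith

theorem integral_le_of_ae_le_quadratic {ν : Measure ℝ} [IsProbabilityMeasure ν]
    {f : ℝ → ℝ} (hf : Integrable f ν) (hint1 : Integrable (fun x => x) ν)
    (hint2 : Integrable (fun x => x ^ 2) ν) {c₀ c₁ c₂ : ℝ}
    (hle : ∀ᵐ x ∂ν, f x ≤ c₀ + c₁ * x + c₂ * x ^ 2) :
    ∫ x, f x ∂ν ≤ c₀ + c₁ * ∫ x, x ∂ν + c₂ * ∫ x, x ^ 2 ∂ν := by
  have hq : Integrable (fun x => c₀ + c₁ * x) ν := (integrable_const _).add (hint1.const_mul _)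
  refine (integral_mono_ae hf (hq.add (hint2.const_mul _)) hle).trans_eq ?_
  simp only [Pi.add_apply]
  rw [integral_add hq (hint2.const_mul _), integral_add (integrable_const _) (hint1.const_mul _),
    integral_const_mul, integral_const_mul, integral_const]
  simp

/-- For a nonnegative random variable with law `ν`, mean `g1 > 0` and finite second
moment `g2`, the Laplace transform satisfies the Vasilyev–Kozlov upper bound
`E[e^{-sX}] ≤ 1 - g1²/g2 + (g1²/g2)·exp(-(g2/g1)·s)` for all `s ≥ 0`. -/
theorem lst_le_vasilyev_kozlov
    (ν : Measure ℝ) [IsProbabilityMeasure ν] (hνpos : ν (Set.Iio 0) = 0)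
    (g1 g2 : ℝ) (hg1 : 0 < g1)
    (hint1 : Integrable (fun x => x) ν)
    (hint2 : Integrable (fun x => x ^ 2) ν)
    (hmean : ∫ x, x ∂ν = g1) (hsec : ∫ x, x ^ 2 ∂ν = g2) :
    ∀ s ≥ (0 : ℝ),
      (∫ x, Real.exp (-s * x) ∂ν) ≤
        1 - g1 ^ 2 / g2 + (g1 ^ 2 / g2) * Real.exp (-(g2 / g1) * s) := by
  have hnonneg : ∀ᵐ x ∂ν, 0 ≤ x := by
    rw [ae_iff]; simpa only [not_le, Iio_def] using hνpos
  have hg2 : 0 < g2 := by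
    have hvar := variance_nonneg (fun x => x) ν
    rw [variance_eq_sub ((memLp_two_iff_integrable_sq (by fun_prop)).2 hint2)] at hvar
    simp only [Pi.pow_apply, hmean, hsec] at hvar
    nlinarith
  intro s hs
  rcases hs.eq_or_lt with rfl | hs
  · simp
  set a := g2 / g1 * s
  have ha : 0 < a := by positivity
  set u := exp (-a) with hu
  set γ := (1 - u - a * u) / a ^ 2 with hγ
  have hbound : ∀ᵐ x ∂ν,
      exp (-s * x) ≤ 1 + (-(1 - u) / a * s - γ * a * s) * x + γ * s ^ 2 * x ^ 2 := by
    filter_upwards [hnonneg] with x hx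
    have := exp_neg_le_expNegMajorant ha (mul_nonneg hs.le hx)
    convert this using 1
    · rw [neg_mul]
    · rw [expNegMajorant, ← hu, hγ]
      ring
  calc ∫ x, exp (-s * x) ∂ν
      ≤ 1 + (-(1 - u) / a * s - γ * a * s) * g1 + γ * s ^ 2 * g2 := by
        simpa only [hmean, hsec] using integral_le_of_ae_le_quadratic
          (integrable_exp_neg_mul_of_ae_nonneg hnonneg hs.le) hint1 hint2 hbound
    _ = 1 - g1 ^ 2 / g2 + (g1 ^ 2 / g2) * Real.exp (-(g2 / g1) * s) := by
        simp only [u, γ, a, neg_mul]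
        field_simp
        ring
end

section
/- If G1 and G2 are distribution functions of nonnegative random variables, each with mean g1 and second moment g2, then sup_{s≥0} |Ĝ1(s) - Ĝ2(s)| ≤ 1 - g1²/g2. -/
/-!
Both transforms lie in `[exp (-s g1), 1 - p + p exp (-s g2 / g1)]`, where `p = g1² / g2`.
The lower end is Jensen's inequality. For the upper end, the quadratic in `x` that equals `1`
at `0` and is tangent to `exp (-s x)` at `c = g2 / g1` dominates `exp (-s x)` on `[0, ∞)`;
its expectation depends only on the first two moments and equals `1 - p + p exp (-s c)`.
Since `g1 ≤ c` and `p ≤ 1`, the interval has length at most `1 - p`.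
-/

open MeasureTheory Set

namespace Real

theorem exp_le_quadratic_of_nonpos {w : ℝ} (hw : w ≤ 0) : exp w ≤ 1 + w + w ^ 2 / 2 := by
  have hderiv (u : ℝ) : HasDerivAt (fun u => (1 + u + u ^ 2 / 2) * exp (-u))
      (-(u ^ 2 / 2 * exp (-u))) u :=
    ((((hasDerivAt_id' u).const_add 1).add ((hasDerivAt_pow 2 u).div_const 2)).fun_mul
      (hasDerivAt_neg' u).exp).congr_deriv (by norm_num; ring)
  have hanti : Antitone fun u => (1 + u + u ^ 2 / 2) * exp (-u) :=
    antitone_of_deriv_nonpos (fun u => (hderiv u).differentiableAt)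
      fun u => (hderiv u).deriv ▸ neg_nonpos.2 (by positivity)
  have h : (1 + 0 + 0 ^ 2 / 2) * exp (-0) ≤ (1 + w + w ^ 2 / 2) * exp (-w) := hanti hw
  norm_num at h
  rw [exp_neg, ← div_eq_mul_inv, le_div_iff₀ (exp_pos w)] at h
  simpa using h

theorem exp_mul_sub_le_of_nonneg_of_le_one {t v : ℝ} (ht : 0 ≤ t) (hv0 : 0 ≤ v) (hv1 : v ≤ 1) :
    exp (t * v) - 1 - t * v ≤ v ^ 2 * (exp t - 1 - t) := by
  have hseries (x : ℝ) : HasSum (fun n => x ^ (n + 2) / (n + 2).factorial) (exp x - 1 - x) := by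
    have h := NormedSpace.expSeries_div_hasSum_exp (𝔸 := ℝ) x
    rw [← exp_eq_exp_ℝ] at h
    simpa [Finset.sum_range_succ, sub_sub] using (hasSum_nat_add_iff' 2).mpr h
  refine hasSum_le (fun n => ?_) (hseries (t * v)) ((hseries t).mul_left (v ^ 2))
  calc (t * v) ^ (n + 2) / (n + 2).factorial
        = v ^ (n + 2) * (t ^ (n + 2) / (n + 2).factorial) := by ring
    _ ≤ v ^ 2 * (t ^ (n + 2) / (n + 2).factorial) :=
        mul_le_mul_of_nonneg_right (pow_le_pow_of_le_one hv0 hv1 (Nat.le_add_left 2 n))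
          (by positivity)

theorem exp_mul_sub_le_of_le_one {t v : ℝ} (ht : 0 ≤ t) (hv : v ≤ 1) :
    exp (t * v) - 1 - t * v ≤ v ^ 2 * (exp t - 1 - t) := by
  rcases le_total 0 v with hv0 | hv0
  · exact exp_mul_sub_le_of_nonneg_of_le_one ht hv0 hv
  · calc exp (t * v) - 1 - t * v ≤ (t * v) ^ 2 / 2 := by
          linarith [exp_le_quadratic_of_nonpos (mul_nonpos_of_nonneg_of_nonpos ht hv0)]
      _ = v ^ 2 * (t ^ 2 / 2) := by ring
      _ ≤ v ^ 2 * (exp t - 1 - t) := by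
          gcongr
          linarith [quadratic_le_exp_of_nonneg ht]

theorem exp_neg_mul_le_of_nonneg {s c x : ℝ} (hs : 0 ≤ s) (hc : 0 < c) (hx : 0 ≤ x) :
    exp (-s * x) ≤
      exp (-(s * c)) * (1 + s * c * (1 - x / c) + (1 - x / c) ^ 2 * (exp (s * c) - 1 - s * c)) := by
  have hv : 1 - x / c ≤ 1 := by linarith [div_nonneg hx hc.le]
  calc exp (-s * x) = exp (-(s * c)) * exp (s * c * (1 - x / c)) := by
        rw [← exp_add]; field_simp; ring_nf
    _ ≤ _ := by
        gcongr
        linarith [exp_mul_sub_le_of_le_one (by positivity : 0 ≤ s * c) hv]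

end Real

open Real

section Moments

variable {μ : Measure ℝ}

theorem ae_nonneg_of_measure_Iio_eq_zero (h : μ (Iio 0) = 0) : ∀ᵐ x ∂μ, 0 ≤ x :=
  (measure_eq_zero_iff_ae_notMem.1 h).mono fun _ hx => not_lt.1 hx

theorem integrable_exp_neg_mul [IsFiniteMeasure μ] (hμ : ∀ᵐ x ∂μ, 0 ≤ x) {s : ℝ} (hs : 0 ≤ s) :
    Integrable (fun x => exp (-s * x)) μ := by
  refine (integrable_const 1).mono' (by fun_prop) ?_
  filter_upwards [hμ] with x hx
  rw [norm_of_nonneg (exp_pos _).le, exp_le_one_iff]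
  nlinarith

variable [IsProbabilityMeasure μ]

theorem integral_quadratic {m1 m2 : ℝ} (h1 : Integrable (fun x => x) μ)
    (h2 : Integrable (fun x => x ^ 2) μ) (hm1 : ∫ x, x ∂μ = m1) (hm2 : ∫ x, x ^ 2 ∂μ = m2)
    (a b d : ℝ) :
    ∫ x, (a + b * x + d * x ^ 2) ∂μ = a + b * m1 + d * m2 := by
  rw [integral_add ((integrable_const a).fun_add (h1.const_mul b)) (h2.const_mul d),
    integral_add (integrable_const a) (h1.const_mul b), integral_const_mul, integral_const_mul,
    hm1, hm2, integral_const, probReal_univ, one_smul]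

theorem sq_integral_le_integral_sq (h1 : Integrable (fun x => x) μ)
    (h2 : Integrable (fun x => x ^ 2) μ) : (∫ x, x ∂μ) ^ 2 ≤ ∫ x, x ^ 2 ∂μ :=
  (even_two.convexOn_pow).map_integral_le (continuous_pow 2).continuousOn isClosed_univ
    (ae_of_all _ fun _ => mem_univ _) h1 h2

theorem exp_neg_mul_integral_le_integral {s : ℝ} (h1 : Integrable (fun x => x) μ)
    (hexp : Integrable (fun x => exp (-s * x)) μ) :
    exp (-s * ∫ x, x ∂μ) ≤ ∫ x, exp (-s * x) ∂μ := by
  rw [← integral_const_mul]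
  exact convexOn_exp.map_integral_le continuousOn_exp isClosed_univ
    (ae_of_all _ fun _ => mem_univ _) (h1.const_mul (-s)) hexp

theorem integral_exp_neg_mul_le {g1 g2 s : ℝ} (hμ : ∀ᵐ x ∂μ, 0 ≤ x) (hg1 : 0 < g1) (hg2 : 0 < g2)
    (hs : 0 ≤ s) (h1 : Integrable (fun x => x) μ) (h2 : Integrable (fun x => x ^ 2) μ)
    (hm1 : ∫ x, x ∂μ = g1) (hm2 : ∫ x, x ^ 2 ∂μ = g2) :
    ∫ x, exp (-s * x) ∂μ ≤ 1 - g1 ^ 2 / g2 + g1 ^ 2 / g2 * exp (-(g2 / g1) * s) := by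
  set c := g2 / g1
  have hc : 0 < c := by positivity
  set t := s * c
  set A := exp t - 1 - t
  have hbound : ∀ᵐ x ∂μ, exp (-s * x) ≤ exp (-t) * (1 + t + A) +
      -(exp (-t) * (t + 2 * A) / c) * x + exp (-t) * A / c ^ 2 * x ^ 2 := by
    filter_upwards [hμ] with x hx
    calc exp (-s * x) ≤ _ := exp_neg_mul_le_of_nonneg hs hc hx
      _ = _ := by field_simp; ring
  calc ∫ x, exp (-s * x) ∂μ
      ≤ ∫ x, (exp (-t) * (1 + t + A) + -(exp (-t) * (t + 2 * A) / c) * x +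
          exp (-t) * A / c ^ 2 * x ^ 2) ∂μ :=
        integral_mono_ae (integrable_exp_neg_mul hμ hs)
          (((integrable_const _).fun_add (h1.const_mul _)).fun_add (h2.const_mul _)) hbound
    _ = exp (-t) * (1 + t + A) + -(exp (-t) * (t + 2 * A) / c) * g1 + exp (-t) * A / c ^ 2 * g2 :=
        integral_quadratic h1 h2 hm1 hm2 _ _ _
    _ = 1 - g1 ^ 2 / g2 + g1 ^ 2 / g2 * exp (-(g2 / g1) * s) := by
        rw [show -(g2 / g1) * s = -t by ring, exp_neg]
        simp only [A, c]
        field_simp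
        ring

end Moments

/-- If `G1` and `G2` are laws of nonnegative random variables, each with mean `g1`
and second moment `g2`, then `sup_{s ≥ 0} |Ĝ1 s - Ĝ2 s| ≤ 1 - g1²/g2`. -/
theorem lst_dist_le_of_same_moments
    (G1 G2 : Measure ℝ) [IsProbabilityMeasure G1] [IsProbabilityMeasure G2]
    (hG1 : G1 (Set.Iio 0) = 0) (hG2 : G2 (Set.Iio 0) = 0)
    (g1 g2 : ℝ) (hg1 : 0 < g1)
    (hint11 : Integrable (fun x => x) G1) (hint12 : Integrable (fun x => x ^ 2) G1)
    (hint21 : Integrable (fun x => x) G2) (hint22 : Integrable (fun x => x ^ 2) G2)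
    (hmean1 : ∫ x, x ∂G1 = g1) (hsec1 : ∫ x, x ^ 2 ∂G1 = g2)
    (hmean2 : ∫ x, x ∂G2 = g1) (hsec2 : ∫ x, x ^ 2 ∂G2 = g2) :
    ∀ s ≥ (0 : ℝ),
      |(∫ x, Real.exp (-s * x) ∂G1) - ∫ x, Real.exp (-s * x) ∂G2| ≤ 1 - g1 ^ 2 / g2 := by
  intro s hs
  have hG1' := ae_nonneg_of_measure_Iio_eq_zero hG1
  have hG2' := ae_nonneg_of_measure_Iio_eq_zero hG2
  have hg12 : g1 ^ 2 ≤ g2 := hmean1 ▸ hsec1 ▸ sq_integral_le_integral_sq hint11 hint12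
  have hg2 : 0 < g2 := (by positivity : 0 < g1 ^ 2).trans_le hg12
  have hlower1 := hmean1 ▸ exp_neg_mul_integral_le_integral hint11 (integrable_exp_neg_mul hG1' hs)
  have hlower2 := hmean2 ▸ exp_neg_mul_integral_le_integral hint21 (integrable_exp_neg_mul hG2' hs)
  have hupper1 := integral_exp_neg_mul_le hG1' hg1 hg2 hs hint11 hint12 hmean1 hsec1
  have hupper2 := integral_exp_neg_mul_le hG2' hg1 hg2 hs hint21 hint22 hmean2 hsec2
  have hgap : g1 ^ 2 / g2 * exp (-(g2 / g1) * s) ≤ exp (-s * g1) := by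
    have hp : g1 ^ 2 / g2 ≤ 1 := (div_le_one hg2).2 hg12
    have hc : g1 ≤ g2 / g1 := by rw [le_div_iff₀ hg1]; nlinarith
    calc g1 ^ 2 / g2 * exp (-(g2 / g1) * s) ≤ 1 * exp (-s * g1) :=
          mul_le_mul hp (exp_le_exp.2 (by nlinarith)) (exp_pos _).le zero_le_one
      _ = exp (-s * g1) := one_mul _
  rw [abs_le]
  constructor <;> linarith
end

section
/- Let G be the CDF of a positive random variable with mean g1 and μ g1 > 1. If γ_G denotes the unique root in (0,1) of z = Ĝ(μ - μz), then γ_G ≥ ℓ, where ℓ is the unique root in (0,1) of z = exp(-μ g1 + μ g1 z). -/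
open MeasureTheory Set

/-- Rolski's lower bound: if `γ ∈ (0,1)` is the root of `z = Ĝ(m - m z)` for the law
`ν` of a positive random variable with mean `g1` and `m g1 > 1`, and `ℓ ∈ (0,1)` is
the root of `z = exp(-m g1 (1 - z))`, then `γ ≥ ℓ`. -/
theorem root_ge_exp_root
    (ν : Measure ℝ) [IsProbabilityMeasure ν] (hνpos : ν (Set.Iic 0) = 0)
    (g1 m γ l : ℝ) (hm : 0 < m) (hρ : 1 < m * g1)
    (hint1 : Integrable (fun x => x) ν) (hmean : ∫ x, x ∂ν = g1)
    (hγ : γ ∈ Set.Ioo (0 : ℝ) 1)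
    (hγroot : (∫ x, Real.exp (-(m - m * γ) * x) ∂ν) = γ)
    (hl : l ∈ Set.Ioo (0 : ℝ) 1)
    (hlroot : l = Real.exp (-(m * g1) + m * g1 * l)) :
    l ≤ γ := by
  obtain ⟨hγ0, hγ1⟩ := hγ
  obtain ⟨hl0, hl1⟩ := hl
  set c : ℝ := -(m - m * γ) with hc
  -- integrability of the exponential integrand
  have hInt : Integrable (fun x => Real.exp (c * x)) ν := by
    by_contra h
    rw [integral_undef h] at hγroot
    linarith
  -- Jensen-type bound via exp t ≥ 1 + t
  have key : Real.exp (c * g1) ≤ γ := by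
    have hA : ∀ x, Real.exp (c * g1) * (1 + c * (x - g1)) ≤ Real.exp (c * x) := by
      intro x
      have h1 : 1 + c * (x - g1) ≤ Real.exp (c * (x - g1)) := by
        have := Real.add_one_le_exp (c * (x - g1)); linarith
      calc Real.exp (c * g1) * (1 + c * (x - g1))
          ≤ Real.exp (c * g1) * Real.exp (c * (x - g1)) :=
            mul_le_mul_of_nonneg_left h1 (Real.exp_pos _).le
        _ = Real.exp (c * x) := by rw [← Real.exp_add]; ring_nf
    have heq : (fun x => Real.exp (c * g1) * (1 + c * (x - g1)))
        = (fun x => (Real.exp (c * g1) * c) * x + Real.exp (c * g1) * (1 - c * g1)) := by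
      funext x; ring
    have hIntL : Integrable (fun x => Real.exp (c * g1) * (1 + c * (x - g1))) ν := by
      rw [heq]; exact (hint1.const_mul _).add (integrable_const _)
    have hmono := integral_mono hIntL hInt hA
    have hcalc : ∫ x, Real.exp (c * g1) * (1 + c * (x - g1)) ∂ν = Real.exp (c * g1) := by
      rw [heq, integral_add (hint1.const_mul _) (integrable_const _), integral_const_mul,
        hmean, integral_const]
      simp
      ring
    rw [hcalc, hγroot] at hmono
    exact hmono
  have hcg1 : c * g1 = -(m * g1) + m * g1 * γ := by rw [hc]; ring
  rw [hcg1] at key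
  -- now pure real analysis
  by_contra hlt
  push_neg at hlt
  set a : ℝ := m * g1 with ha
  set t : ℝ := (1 - l) / (1 - γ) with ht
  have h1γ : 0 < 1 - γ := by linarith
  have ht0 : 0 < t := div_pos (by linarith) h1γ
  have ht1 : t < 1 := by
    rw [ht, div_lt_one h1γ]; linarith
  have hltt : l = t * γ + (1 - t) * 1 := by
    rw [ht]; field_simp; ring
  have hxy : -a + a * γ ≠ (0 : ℝ) := by nlinarith
  have hconv := strictConvexOn_exp.2 (Set.mem_univ (-a + a * γ)) (Set.mem_univ (0 : ℝ))
    hxy ht0 (by linarith : (0:ℝ) < 1 - t) (by ring)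
  simp only [smul_eq_mul, mul_zero, add_zero, Real.exp_zero, mul_one] at hconv
  have harg : t * (-a + a * γ) = -a + a * l := by rw [hltt]; ring
  rw [harg] at hconv
  rw [← hlroot] at hconv
  nlinarith [Real.exp_pos (-a + a * γ)]
end

section
/- Let λ > 0, μ > λ, ρ = λ/μ, and let σ² > 1/λ². Let ℓ ∈ (0,1) be the unique root of z = e^{-(μ/λ)(1-z)}. Then ℓ ≤ ρ ≤ 1 + (1/(1 + λ²σ²))(ℓ - 1). -/
/-!
Write `c = μ/λ`, so that `ℓ = exp (-c (1 - ℓ))` and `ρ = 1/c`. The lower bound `c ℓ ≤ 1` is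
`1 + x ≤ exp x` at `x = c (1 - ℓ)`. For the upper bound, `tanh (x/2) ≤ x/2` at the same `x` reads
`(1 - ℓ)/(1 + ℓ) ≤ c (1 - ℓ)/2`, i.e. `ρ ≤ (1 + ℓ)/2`; and `λ²σ² > 1` makes the weight
`1/(1 + λ²σ²)` less than `1/2`, so `(1 + ℓ)/2 ≤ 1 + (ℓ - 1)/(1 + λ²σ²)`.
-/

open Real

namespace Real

theorem sinh_le_mul_cosh {x : ℝ} (hx : 0 ≤ x) : sinh x ≤ x * cosh x := by
  have hmono : MonotoneOn (fun y ↦ y * cosh y - sinh y) (Set.Ici 0) := by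
    refine monotoneOn_of_hasDerivWithinAt_nonneg (f' := fun y ↦ y * sinh y) (convex_Ici 0)
      (by fun_prop) (fun y _ ↦ ?_) (fun y hy ↦ ?_)
    · have h : HasDerivAt (fun y ↦ y * cosh y - sinh y) (1 * cosh y + y * sinh y - cosh y) y :=
        ((hasDerivAt_id' y).mul (hasDerivAt_cosh y)).sub (hasDerivAt_sinh y)
      simpa using h.hasDerivWithinAt
    · rw [interior_Ici] at hy
      exact mul_nonneg (le_of_lt hy) (sinh_pos_iff.mpr hy).le
  simpa using hmono Set.self_mem_Ici hx hx

theorem one_sub_exp_neg_le_half_mul {x : ℝ} (hx : 0 ≤ x) :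
    1 - exp (-x) ≤ x / 2 * (1 + exp (-x)) := by
  have h := sinh_le_mul_cosh (by positivity : 0 ≤ x / 2)
  rw [sinh_eq, cosh_eq] at h
  have hexp : exp (-x) = exp (-(x / 2)) * exp (-(x / 2)) := by rw [← exp_add]; ring_nf
  have hunit : exp (x / 2) * exp (-(x / 2)) = 1 := by rw [← exp_add]; simp
  rw [hexp]
  nlinarith [exp_pos (-(x / 2))]

end Real

section ExpFixedPoint

variable {c l : ℝ}

theorem mul_le_one_of_eq_exp (hl0 : 0 < l) (hl1 : l < 1) (h : l = exp (-c * (1 - l))) :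
    c * l ≤ 1 := by
  have hinv : l⁻¹ = exp (c * (1 - l)) := by
    rw [← neg_neg (c * (1 - l)), exp_neg, ← neg_mul, ← h]
  have hexp : c * (1 - l) + 1 ≤ l⁻¹ := hinv ▸ add_one_le_exp _
  have : (c * l - 1) * (1 - l) ≤ 0 := by
    have := mul_le_mul_of_nonneg_right hexp hl0.le
    rw [inv_mul_cancel₀ hl0.ne'] at this
    linarith
  nlinarith

theorem two_le_mul_one_add_of_eq_exp (hc : 0 ≤ c) (hl1 : l < 1) (h : l = exp (-c * (1 - l))) :
    2 ≤ c * (1 + l) := by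
  have key := one_sub_exp_neg_le_half_mul (mul_nonneg hc (sub_nonneg.mpr hl1.le))
  rw [← neg_mul, ← h] at key
  nlinarith

end ExpFixedPoint

/-- Specialization of Rolski's bounds (inequality (c1)): for `λ > 0`, `μ > λ`,
`ρ = λ/μ`, `σ² > 1/λ²`, and `ℓ ∈ (0,1)` the root of `z = e^{-(μ/λ)(1-z)}`, we have
`ℓ ≤ ρ ≤ 1 + (1/(1 + λ²σ²))(ℓ - 1)`. -/
theorem rho_between_rolski_bounds
    (lam m s2 l : ℝ) (hlam : 0 < lam) (hm : lam < m)
    (hs2 : 1 / lam ^ 2 < s2)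
    (hl : l ∈ Set.Ioo (0 : ℝ) 1)
    (hlroot : l = Real.exp (-(m / lam) * (1 - l))) :
    l ≤ lam / m ∧ lam / m ≤ 1 + (1 / (1 + lam ^ 2 * s2)) * (l - 1) := by
  obtain ⟨hl0, hl1⟩ := hl
  have hm0 : 0 < m := hlam.trans hm
  have hlower := mul_le_one_of_eq_exp hl0 hl1 hlroot
  have hupper := two_le_mul_one_add_of_eq_exp (div_pos hm0 hlam).le hl1 hlroot
  have hweight : 1 / (1 + lam ^ 2 * s2) ≤ 1 / 2 := by
    have : 1 < lam ^ 2 * s2 := by rwa [div_lt_iff₀' (by positivity)] at hs2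
    gcongr
    linarith
  constructor
  · rw [le_div_iff₀ hm0]
    rwa [div_mul_eq_mul_div, div_le_one hlam, mul_comm] at hlower
  · calc lam / m ≤ (1 + l) / 2 := by
          rw [div_mul_eq_mul_div, le_div_iff₀ hlam] at hupper
          rw [div_le_div_iff₀ hm0 two_pos]
          linarith
      _ ≤ 1 + 1 / (1 + lam ^ 2 * s2) * (l - 1) := by nlinarith
end
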